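/- arXiv:2010.06250 — 5 statements merged into one kernel-verified Lean document; each statement's English description precedes it below -/
import Mathlib

section
/- (Theorem 1, local regret bound for the time-smoothed online prox-grad method.) Let g : ℝⁿ → ℝ ∪ {+∞} be proper, convex and lower semicontinuous, η > 0, δ > 0, T ≥ 1, w ∈ {1, …, T}, and let f_t : ℝⁿ → ℝ be differentiable for t = 1, …, T (with f_t ≡ 0 for t ≤ 0). Suppose x₁, …, x_T ∈ ℝⁿ satisfy the stopping condition ‖P_η^g(x_t; ∇S_{t−1,w}(x_t))‖ ≤ δ/w for every t = 1, …, T (where S_{0,w} ≡ 0). Then the local regret satisfies Σ_{t=1}^T ‖P_η^g(x_t; ∇S_{t,w}(x_t))‖² ≤ (2/w²)·(T δ² + Σ_{t=1}^T ‖∇f_t(x_t) − ∇f_{t−w}(x_t)‖²). -/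
noncomputable section

open Finset MeasureTheory
open scoped RealInnerProductSpace

/-- `g : ℝⁿ → ℝ ∪ {+∞}` is proper, convex and lower semicontinuous. -/
def ProperConvexLsc {n : ℕ} (g : EuclideanSpace ℝ (Fin n) → WithTop ℝ) : Prop :=
  (∃ x, g x ≠ ⊤) ∧ LowerSemicontinuous g ∧
    ∀ x y : EuclideanSpace ℝ (Fin n), ∀ a b : ℝ, 0 ≤ a → 0 ≤ b → a + b = 1 →
      g (a • x + b • y) ≤ (a : WithTop ℝ) * g x + (b : WithTop ℝ) * g y

/-- `p` is a minimizer of `z ↦ η·g(z) + ½‖u − z‖²`. -/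
def IsProxPt {n : ℕ} (g : EuclideanSpace ℝ (Fin n) → WithTop ℝ) (η : ℝ)
    (u p : EuclideanSpace ℝ (Fin n)) : Prop :=
  ∀ z : EuclideanSpace ℝ (Fin n),
    (η : WithTop ℝ) * g p + ((1 / 2 * ‖u - p‖ ^ 2 : ℝ) : WithTop ℝ) ≤
      (η : WithTop ℝ) * g z + ((1 / 2 * ‖u - z‖ ^ 2 : ℝ) : WithTop ℝ)

/-- `prox` is the proximal operator of `ηg`: `prox u` is the unique minimizer of
`z ↦ η·g(z) + ½‖u − z‖²`. -/
def IsProxFun {n : ℕ} (g : EuclideanSpace ℝ (Fin n) → WithTop ℝ) (η : ℝ)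
    (prox : EuclideanSpace ℝ (Fin n) → EuclideanSpace ℝ (Fin n)) : Prop :=
  ∀ u, IsProxPt g η u (prox u) ∧ ∀ q, IsProxPt g η u q → q = prox u

/-- The prox-grad residual `P_η^g(x; d) = (x − prox_{ηg}(x − η d))/η`. -/
def proxRes {n : ℕ} (prox : EuclideanSpace ℝ (Fin n) → EuclideanSpace ℝ (Fin n)) (η : ℝ)
    (x d : EuclideanSpace ℝ (Fin n)) : EuclideanSpace ℝ (Fin n) :=
  η⁻¹ • (x - prox (x - η • d))

/-!
The prox-grad residual `d ↦ P_η^g(x; d)` is `1`-Lipschitz, because `prox_{ηg}` is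
nonexpansive: adding the variational inequalities `⟪u - p, z - p⟫ ≤ η (g z - g p)` of two
prox points `p`, `q` gives `‖p - q‖² ≤ ⟪u - v, p - q⟫`. The gradients of `S_{t,w}` and
`S_{t-1,w}` differ by `(∇f_t - ∇f_{t-w}) / w`, so the stopping rule bounds the `t`-th residual
by `(δ + ‖∇f_t(x_t) - ∇f_{t-w}(x_t)‖) / w`, and `(a + b)² ≤ 2 (a² + b²)` finishes the proof.
-/

open Filter Topology

theorem Finset.sum_Ioc_sub_sum_Ico {α M : Type*} [PartialOrder α] [LocallyFiniteOrder α]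
    [AddCommGroup M] {a b : α} (hab : a ≤ b) (f : α → M) :
    ∑ i ∈ Ioc a b, f i - ∑ i ∈ Ico a b, f i = f b - f a := by
  rw [sub_eq_sub_iff_add_eq_add, sum_Ioc_add_eq_sum_Icc hab, add_comm,
    sum_Ico_add_eq_sum_Icc hab]

namespace IsProxPt

variable {n : ℕ} {g : EuclideanSpace ℝ (Fin n) → WithTop ℝ} {η : ℝ}
  {u v p q z : EuclideanSpace ℝ (Fin n)}

lemma exists_eq_coe (hg : ∃ x, g x ≠ ⊤) (hη : 0 < η) (hp : IsProxPt g η u p) :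
    ∃ r : ℝ, g p = r := by
  have hfin : g p ≠ ⊤ := by
    intro htop
    obtain ⟨x₀, hx₀⟩ := hg
    obtain ⟨r₀, hr₀⟩ := WithTop.ne_top_iff_exists.mp hx₀
    have h := hp x₀
    rw [htop, ← hr₀, WithTop.mul_top (by exact_mod_cast hη.ne'), top_add, top_le_iff] at h
    exact WithTop.coe_ne_top (by exact_mod_cast h)
  obtain ⟨r, hr⟩ := WithTop.ne_top_iff_exists.mp hfin
  exact ⟨r, hr.symm⟩

lemma le_of_eq_coe (hp : IsProxPt g η u p) {gp gz : ℝ} (hgp : g p = gp) (hgz : g z = gz) :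
    η * gp + 1 / 2 * ‖u - p‖ ^ 2 ≤ η * gz + 1 / 2 * ‖u - z‖ ^ 2 := by
  have h := hp z
  rw [hgp, hgz] at h
  exact_mod_cast h

lemma inner_sub_le
    (hconv : ∀ x y : EuclideanSpace ℝ (Fin n), ∀ a b : ℝ, 0 ≤ a → 0 ≤ b → a + b = 1 →
      g (a • x + b • y) ≤ (a : WithTop ℝ) * g x + (b : WithTop ℝ) * g y)
    (hη : 0 ≤ η) (hp : IsProxPt g η u p) {gp gz : ℝ} (hgp : g p = gp) (hgz : g z = gz) :
    ⟪u - p, z - p⟫ ≤ η * (gz - gp) := by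
  -- Test the minimality of `p` against `(1 - a) • p + a • z` and let `a → 0⁺`.
  set C := ‖z - p‖ ^ 2
  have hseg : ∀ a ∈ Set.Ioo (0 : ℝ) 1, ⟪u - p, z - p⟫ ≤ η * (gz - gp) + a / 2 * C := by
    rintro a ⟨ha₀, ha₁⟩
    obtain ⟨ga, hga, hga_le⟩ := WithTop.le_coe_iff.mp <|
      (hconv p z (1 - a) a (by linarith) ha₀.le (by ring)).trans_eq
        (by rw [hgp, hgz]; push_cast; rfl)
    have hmin := hp.le_of_eq_coe hgp hga
    have hnorm : ‖u - ((1 - a) • p + a • z)‖ ^ 2 =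
        ‖u - p‖ ^ 2 - 2 * a * ⟪u - p, z - p⟫ + a ^ 2 * C := by
      rw [show u - ((1 - a) • p + a • z) = (u - p) - a • (z - p) by module,
        norm_sub_sq_real, real_inner_smul_right, norm_smul, mul_pow, Real.norm_eq_abs, sq_abs]
      ring
    have h : a * ⟪u - p, z - p⟫ ≤ a * (η * (gz - gp) + a / 2 * C) := by
      nlinarith [mul_le_mul_of_nonneg_left hga_le hη]
    exact le_of_mul_le_mul_left h ha₀
  have hlim : Tendsto (fun a : ℝ => η * (gz - gp) + a / 2 * C) (𝓝[>] 0)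
      (𝓝 (η * (gz - gp))) := by
    have h : Continuous fun a : ℝ => η * (gz - gp) + a / 2 * C := by fun_prop
    simpa using (h.tendsto 0).mono_left nhdsWithin_le_nhds
  exact ge_of_tendsto hlim (eventually_of_mem (Ioo_mem_nhdsGT one_pos) hseg)

lemma norm_sub_le (hg : ProperConvexLsc g) (hη : 0 < η) (hp : IsProxPt g η u p)
    (hq : IsProxPt g η v q) : ‖p - q‖ ≤ ‖u - v‖ := by
  obtain ⟨hproper, -, hconv⟩ := hg
  obtain ⟨gp, hgp⟩ := hp.exists_eq_coe hproper hη
  obtain ⟨gq, hgq⟩ := hq.exists_eq_coe hproper hη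
  have hpq := hp.inner_sub_le hconv hη.le hgp hgq
  have hqp := hq.inner_sub_le hconv hη.le hgq hgp
  have hfirm : ‖p - q‖ ^ 2 ≤ ⟪u - v, p - q⟫ := by
    have h : ⟪u - v, p - q⟫ - ‖p - q‖ ^ 2 = -⟪u - p, q - p⟫ - ⟪v - q, p - q⟫ := by
      rw [← real_inner_self_eq_norm_sq]
      simp only [inner_sub_left, inner_sub_right, real_inner_comm]
      ring
    linarith
  nlinarith [real_inner_le_norm (u - v) (p - q), norm_nonneg (u - v), norm_nonneg (p - q)]

end IsProxPt

lemma norm_proxRes_sub_le {n : ℕ} {g : EuclideanSpace ℝ (Fin n) → WithTop ℝ}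
    (hg : ProperConvexLsc g) {η : ℝ} (hη : 0 < η)
    {prox : EuclideanSpace ℝ (Fin n) → EuclideanSpace ℝ (Fin n)}
    (hprox : ∀ u, IsProxPt g η u (prox u)) (x d d' : EuclideanSpace ℝ (Fin n)) :
    ‖proxRes prox η x d - proxRes prox η x d'‖ ≤ ‖d - d'‖ :=
  calc ‖proxRes prox η x d - proxRes prox η x d'‖
      = η⁻¹ * ‖prox (x - η • d') - prox (x - η • d)‖ := by
        rw [proxRes, proxRes, ← smul_sub, sub_sub_sub_cancel_left, norm_smul,
          Real.norm_of_nonneg (inv_nonneg.2 hη.le)]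
    _ ≤ η⁻¹ * ‖(x - η • d') - (x - η • d)‖ := by
        gcongr
        exact (hprox _).norm_sub_le hg hη (hprox _)
    _ = ‖d - d'‖ := by
        rw [sub_sub_sub_cancel_left, ← smul_sub, norm_smul, Real.norm_of_nonneg hη.le,
          inv_mul_cancel_left₀ hη.ne']

lemma sq_norm_proxRes_le {n : ℕ} {g : EuclideanSpace ℝ (Fin n) → WithTop ℝ}
    (hg : ProperConvexLsc g) {η : ℝ} (hη : 0 < η)
    {prox : EuclideanSpace ℝ (Fin n) → EuclideanSpace ℝ (Fin n)}
    (hprox : ∀ u, IsProxPt g η u (prox u)) (x d d₀ : EuclideanSpace ℝ (Fin n)) :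
    ‖proxRes prox η x d‖ ^ 2 ≤ 2 * (‖proxRes prox η x d₀‖ ^ 2 + ‖d - d₀‖ ^ 2) :=
  calc ‖proxRes prox η x d‖ ^ 2 ≤ (‖proxRes prox η x d₀‖ + ‖d - d₀‖) ^ 2 := by
        gcongr
        exact (norm_le_insert' _ _).trans
          (add_le_add_right (norm_proxRes_sub_le hg hη hprox x d d₀) _)
    _ ≤ 2 * (‖proxRes prox η x d₀‖ ^ 2 + ‖d - d₀‖ ^ 2) := add_sq_le

theorem stmt3_general {n : ℕ} (g : EuclideanSpace ℝ (Fin n) → WithTop ℝ)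
    (hg : ProperConvexLsc g) (η δ : ℝ) (hη : 0 < η)
    (prox : EuclideanSpace ℝ (Fin n) → EuclideanSpace ℝ (Fin n))
    (hprox : IsProxFun g η prox)
    (T w : ℕ)
    (f' : ℤ → EuclideanSpace ℝ (Fin n) → EuclideanSpace ℝ (Fin n))
    (x : ℤ → EuclideanSpace ℝ (Fin n))
    (hstop : ∀ t ∈ Finset.Icc (1 : ℤ) T,
      ‖proxRes prox η (x t) ((w : ℝ)⁻¹ • ∑ i ∈ Finset.Icc (t - w) (t - 1), f' i (x t))‖ ≤
        δ / w) :
    ∑ t ∈ Finset.Icc (1 : ℤ) T,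
        ‖proxRes prox η (x t) ((w : ℝ)⁻¹ • ∑ i ∈ Finset.Icc (t - w + 1) t, f' i (x t))‖ ^ 2 ≤
      2 / (w : ℝ) ^ 2 *
        ((T : ℝ) * δ ^ 2 +
          ∑ t ∈ Finset.Icc (1 : ℤ) T, ‖f' t (x t) - f' (t - w) (x t)‖ ^ 2) := by
  have hstep : ∀ t ∈ Finset.Icc (1 : ℤ) T,
      ‖proxRes prox η (x t) ((w : ℝ)⁻¹ • ∑ i ∈ Finset.Icc (t - w + 1) t, f' i (x t))‖ ^ 2 ≤
        2 / (w : ℝ) ^ 2 * (δ ^ 2 + ‖f' t (x t) - f' (t - w) (x t)‖ ^ 2) := by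
    intro t ht
    set Δ := f' t (x t) - f' (t - w) (x t)
    set d := (w : ℝ)⁻¹ • ∑ i ∈ Finset.Icc (t - w + 1) t, f' i (x t)
    set d₀ := (w : ℝ)⁻¹ • ∑ i ∈ Finset.Icc (t - w) (t - 1), f' i (x t)
    have hwindow : d - d₀ = (w : ℝ)⁻¹ • Δ := by
      rw [← smul_sub, Finset.Icc_add_one_left_eq_Ioc, Finset.Icc_sub_one_right_eq_Ico,
        Finset.sum_Ioc_sub_sum_Ico (by omega)]
    calc ‖proxRes prox η (x t) d‖ ^ 2
        ≤ 2 * (‖proxRes prox η (x t) d₀‖ ^ 2 + ‖d - d₀‖ ^ 2) :=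
          sq_norm_proxRes_le hg hη (fun u => (hprox u).1) _ _ _
      _ ≤ 2 * ((δ / w) ^ 2 + (‖Δ‖ / w) ^ 2) := by
          rw [hwindow, norm_smul, Real.norm_of_nonneg (by positivity), inv_mul_eq_div]
          gcongr
          exact hstop t ht
      _ = 2 / (w : ℝ) ^ 2 * (δ ^ 2 + ‖Δ‖ ^ 2) := by ring
  calc _ ≤ ∑ t ∈ Finset.Icc (1 : ℤ) T,
        2 / (w : ℝ) ^ 2 * (δ ^ 2 + ‖f' t (x t) - f' (t - w) (x t)‖ ^ 2) :=
        Finset.sum_le_sum hstep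
    _ = _ := by
        rw [← Finset.mul_sum, Finset.sum_add_distrib, Finset.sum_const, Int.card_Icc]
        simp

/-- Theorem 1: local regret bound for the time-smoothed online prox-grad
method.  Here `f t = 0` for `t ≤ 0`, `f' t x` is the gradient `∇f_t(x)`, and the gradient of
the sliding average `S_{t,w}` at `x` is `(1/w) Σ_{i=t−w+1}^t f' i x`.  If the iterates satisfy
the stopping rule `‖P_η^g(x_t; ∇S_{t−1,w}(x_t))‖ ≤ δ/w`, then the local regret is at most
`(2/w²)(Tδ² + Σ_t ‖∇f_t(x_t) − ∇f_{t−w}(x_t)‖²)`. -/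
theorem stmt3 {n : ℕ} (g : EuclideanSpace ℝ (Fin n) → WithTop ℝ)
    (hg : ProperConvexLsc g) (η δ : ℝ) (hη : 0 < η) (hδ : 0 < δ)
    (prox : EuclideanSpace ℝ (Fin n) → EuclideanSpace ℝ (Fin n))
    (hprox : IsProxFun g η prox)
    (T w : ℕ) (hT : 1 ≤ T) (hw1 : 1 ≤ w) (hwT : w ≤ T)
    (f : ℤ → EuclideanSpace ℝ (Fin n) → ℝ)
    (f' : ℤ → EuclideanSpace ℝ (Fin n) → EuclideanSpace ℝ (Fin n))
    (hf0 : ∀ t ≤ (0 : ℤ), ∀ z, f t z = 0) (hf'0 : ∀ t ≤ (0 : ℤ), ∀ z, f' t z = 0)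
    (hgrad : ∀ t z, HasGradientAt (f t) (f' t z) z)
    (x : ℤ → EuclideanSpace ℝ (Fin n))
    (hstop : ∀ t ∈ Finset.Icc (1 : ℤ) T,
      ‖proxRes prox η (x t) ((w : ℝ)⁻¹ • ∑ i ∈ Finset.Icc (t - w) (t - 1), f' i (x t))‖ ≤
        δ / w) :
    ∑ t ∈ Finset.Icc (1 : ℤ) T,
        ‖proxRes prox η (x t) ((w : ℝ)⁻¹ • ∑ i ∈ Finset.Icc (t - w + 1) t, f' i (x t))‖ ^ 2 ≤
      2 / (w : ℝ) ^ 2 *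
        ((T : ℝ) * δ ^ 2 +
          ∑ t ∈ Finset.Icc (1 : ℤ) T, ‖f' t (x t) - f' (t - w) (x t)‖ ^ 2) :=
  stmt3_general g hg η δ hη prox hprox T w f' x hstop
end
end

section
/- (Theorem 3, bound on the number of prox-grad queries of the time-smoothed online prox-grad method.) Let g : ℝⁿ → ℝ ∪ {+∞} be proper, convex, lower semicontinuous and nonnegative, let η ∈ (0, 2/L), δ > 0, T ≥ 1, w ∈ {1, …, T}, and let f_t : ℝⁿ → ℝ (t = 1, …, T, with f_t ≡ 0 for t ≤ 0) be differentiable, L-smooth on dom g, and satisfy |f_t(x)| ≤ M for all x ∈ dom g. Let x₁ ∈ dom g and for each t = 1, …, T let y_t¹ = x_t, y_t^{k+1} = prox_{ηg}(y_t^k − η ∇S_{t,w}(y_t^k)) for k = 1, …, τ_t, where ‖P_η^g(y_t^k; ∇S_{t,w}(y_t^k))‖ > δ/w for each k = 1, …, τ_t, and x_{t+1} = y_t^{τ_t + 1}. Then the total number of prox-grad operations satisfies Σ_{t=1}^T τ_t ≤ 2w·(w·(g(x₁) + M) + 2MT) / ((2 − ηL)·η·δ²); in particular it is O(w²) whenever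 T = O(w). -/
/-
Each prox-grad step on `Φ_t = S_{t,w} + g` whose residual exceeds `δ/w` decreases `Φ_t` by at
least `c = (2 - ηL)ηδ²/(2w²)`: this is the descent lemma for the `L`-smooth part combined with
the variational inequality `⟪u - p, z - p⟫ ≤ η (g z - g p)` of `p = prox_{ηg} u`. Passing from
round `t - 1` to round `t` swaps one function of the window for another, so
`Φ_t ≤ Φ_{t-1} + 2M/w` on `dom g`. Telescoping from `Φ_0 = g` (all `f_t` vanish for `t ≤ 0`)
down to `Φ_T ≥ -M` gives `c · Σ τ_t ≤ g(x₁) + M + 2MT/w`.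
-/

noncomputable section
open Finset MeasureTheory
open scoped RealInnerProductSpace

open Filter Topology

theorem le_add_inner_add_sq_of_lipschitzOn_gradient {E : Type*} [NormedAddCommGroup E]
    [InnerProductSpace ℝ E] [CompleteSpace E] {φ : E → ℝ} {φ' : E → E} {s : Set E} {L : ℝ}
    (hs : Convex ℝ s) (hφ : ∀ z ∈ s, HasGradientAt φ (φ' z) z)
    (hlip : ∀ a ∈ s, ∀ b ∈ s, ‖φ' a - φ' b‖ ≤ L * ‖a - b‖) {y p : E} (hy : y ∈ s)
    (hp : p ∈ s) :
    φ p ≤ φ y + ⟪φ' y, p - y⟫ + L / 2 * ‖p - y‖ ^ 2 := by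
  set v := p - y
  have hseg : ∀ r ∈ Set.Icc (0 : ℝ) 1, y + r • v ∈ s := fun r hr => by
    simpa [v, AffineMap.lineMap_apply_module', add_comm] using hs.lineMap_mem hy hp hr
  set χ : ℝ → ℝ := fun r => φ (y + r • v) - r * ⟪φ' y, v⟫ - L / 2 * r ^ 2 * ‖v‖ ^ 2
  have hχ' : ∀ r ∈ Set.Icc (0 : ℝ) 1,
      HasDerivAt χ (⟪φ' (y + r • v) - φ' y, v⟫ - L * r * ‖v‖ ^ 2) r := by
    intro r hr
    have hline : HasDerivAt (fun r : ℝ => y + r • v) v r := by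
      simpa using ((hasDerivAt_id r).smul_const v).const_add y
    have hcomp := (hφ _ (hseg r hr)).hasFDerivAt.comp_hasDerivAt r hline
    have hquad := ((hasDerivAt_pow 2 r).const_mul (L / 2)).mul_const (‖v‖ ^ 2)
    refine ((hcomp.sub ((hasDerivAt_id r).mul_const ⟪φ' y, v⟫)).sub hquad).congr_deriv ?_
    rw [InnerProductSpace.toDual_apply_apply, inner_sub_left]
    ring
  have hanti : AntitoneOn χ (Set.Icc 0 1) := by
    apply antitoneOn_of_deriv_nonpos (convex_Icc 0 1)
    · exact fun r hr => (hχ' r hr).continuousAt.continuousWithinAt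
    · exact fun r hr => (hχ' r (interior_subset hr)).differentiableAt.differentiableWithinAt
    · intro r hr
      rw [interior_Icc] at hr
      rw [(hχ' r (Set.Ioo_subset_Icc_self hr)).deriv, sub_nonpos]
      calc ⟪φ' (y + r • v) - φ' y, v⟫ ≤ ‖φ' (y + r • v) - φ' y‖ * ‖v‖ :=
            real_inner_le_norm _ _
        _ ≤ L * ‖r • v‖ * ‖v‖ := by
          gcongr
          simpa using hlip _ (hseg r (Set.Ioo_subset_Icc_self hr)) y hy
        _ = L * r * ‖v‖ ^ 2 := by rw [norm_smul, Real.norm_of_nonneg hr.1.le]; ring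
  have hχ01 := hanti (by simp) (by simp) zero_le_one
  simp only [χ, v, zero_smul, add_zero, one_smul, add_sub_cancel, zero_mul, sub_zero,
    one_pow, one_mul, ne_eq, OfNat.ofNat_ne_zero, not_false_eq_true, zero_pow] at hχ01
  linarith

def ConvexWithTop {E : Type*} [AddCommMonoid E] [Module ℝ E] (g : E → WithTop ℝ) : Prop :=
  ∀ x y : E, ∀ a b : ℝ, 0 ≤ a → 0 ≤ b → a + b = 1 →
    g (a • x + b • y) ≤ (a : WithTop ℝ) * g x + (b : WithTop ℝ) * g y

theorem ConvexWithTop.convex_setOf_ne_top {E : Type*} [AddCommMonoid E] [Module ℝ E]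
    {g : E → WithTop ℝ} (hg : ConvexWithTop g) : Convex ℝ {z | g z ≠ ⊤} := by
  intro x hx y hy a b ha hb hab
  lift g x to ℝ using hx with gx hgx
  lift g y to ℝ using hy with gy hgy
  refine ne_top_of_le_ne_top ?_ (hg x y a b ha hb hab)
  rw [← hgx, ← hgy]
  exact WithTop.coe_ne_top

section telescoping

variable {α : Type*} {D : Set α}

theorem add_mul_le_of_forall_step {Φ : α → ℝ} {y : ℕ → α} {τ : ℕ} {c : ℝ}
    (hstep : ∀ k, 1 ≤ k → k ≤ τ → y k ∈ D → y (k + 1) ∈ D ∧ Φ (y (k + 1)) + c ≤ Φ (y k))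
    (h1 : y 1 ∈ D) : y (τ + 1) ∈ D ∧ Φ (y (τ + 1)) + τ * c ≤ Φ (y 1) := by
  suffices ∀ j ≤ τ, y (j + 1) ∈ D ∧ Φ (y (j + 1)) + j * c ≤ Φ (y 1) from this τ le_rfl
  intro j
  induction j with
  | zero => simpa using h1
  | succ j ih =>
    intro hj
    obtain ⟨hmem, hle⟩ := ih (by omega)
    obtain ⟨hmem', hle'⟩ := hstep (j + 1) (by omega) hj hmem
    refine ⟨hmem', ?_⟩
    push_cast
    linarith

theorem sum_add_le_of_forall_round {Φ : ℤ → α → ℝ} {x : ℤ → α} {a : ℤ → ℝ} {b : ℝ} (T : ℕ)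
    (hround : ∀ t ∈ Icc (1 : ℤ) T, x t ∈ D →
      x (t + 1) ∈ D ∧ Φ t (x (t + 1)) + a t ≤ Φ t (x t))
    (hdrift : ∀ t ∈ Icc (1 : ℤ) T, ∀ z ∈ D, Φ t z ≤ Φ (t - 1) z + b) (h1 : x 1 ∈ D) :
    x (T + 1) ∈ D ∧ ∑ t ∈ Icc (1 : ℤ) T, a t + Φ T (x (T + 1)) ≤ Φ 0 (x 1) + T * b := by
  induction T with
  | zero => simpa using h1
  | succ T ih =>
    have hsub : Icc (1 : ℤ) T ⊆ Icc 1 (T + 1 : ℕ) := Icc_subset_Icc le_rfl (by omega)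
    have hlast : ((T + 1 : ℕ) : ℤ) ∈ Icc (1 : ℤ) (T + 1 : ℕ) := by simp
    obtain ⟨hmem, hle⟩ := ih (fun t ht => hround t (hsub ht)) (fun t ht => hdrift t (hsub ht))
    obtain ⟨hmem', hle'⟩ := hround _ hlast (by simpa using hmem)
    have hdrift' := hdrift _ hlast _ hmem
    have hIcc : Icc (1 : ℤ) (T + 1 : ℕ) = insert ((T + 1 : ℕ) : ℤ) (Icc (1 : ℤ) T) := by
      ext i; simp only [mem_Icc, mem_insert]; omega
    rw [hIcc, sum_insert (by simp)]
    push_cast at hmem' hle' hdrift' ⊢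
    simp only [add_sub_cancel_right] at hdrift'
    exact ⟨hmem', by linarith⟩

end telescoping

theorem Int.forall_le_of_forall_Icc_one {P : ℤ → Prop} {T : ℤ} (h0 : ∀ i ≤ 0, P i)
    (h1 : ∀ i ∈ Icc 1 T, P i) : ∀ i ≤ T, P i := fun i hi =>
  (le_or_gt i 0).elim (h0 i) fun hi0 => h1 i (mem_Icc.2 ⟨hi0, hi⟩)

section proxGrad

variable {n : ℕ} {g : EuclideanSpace ℝ (Fin n) → WithTop ℝ} {η L : ℝ}
  {u p : EuclideanSpace ℝ (Fin n)} {φ : EuclideanSpace ℝ (Fin n) → ℝ}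
  {φ' prox : EuclideanSpace ℝ (Fin n) → EuclideanSpace ℝ (Fin n)}

theorem IsProxPt.ne_top (hp : IsProxPt g η u p) (hη : 0 < η) {x₀ : EuclideanSpace ℝ (Fin n)}
    (hx₀ : g x₀ ≠ ⊤) : g p ≠ ⊤ := by
  intro htop
  lift g x₀ to ℝ using hx₀ with c hc
  have := hp x₀
  rw [htop, ← hc, WithTop.mul_top (by exact_mod_cast hη.ne'), top_add, ← WithTop.coe_mul,
    ← WithTop.coe_add] at this
  exact WithTop.not_top_le_coe _ this

theorem IsProxPt.inner_le (hg : ConvexWithTop g) (hη : 0 ≤ η) (hp : IsProxPt g η u p)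
    {z : EuclideanSpace ℝ (Fin n)} {gp gz : ℝ} (hgp : g p = gp) (hgz : g z = gz) :
    ⟪u - p, z - p⟫ ≤ η * (gz - gp) := by
  -- compare `p` with the points `(1 - a) p + a z` of the segment and let `a → 0⁺`
  have hsmall : ∀ a ∈ Set.Ioo (0 : ℝ) 1,
      ⟪u - p, z - p⟫ ≤ η * (gz - gp) + a / 2 * ‖z - p‖ ^ 2 := by
    rintro a ⟨ha0, ha1⟩
    have hconv := hg p z (1 - a) a (by linarith) ha0.le (by ring)
    rw [hgp, hgz, ← WithTop.coe_mul, ← WithTop.coe_mul, ← WithTop.coe_add] at hconv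
    lift g ((1 - a) • p + a • z) to ℝ using ne_top_of_le_ne_top WithTop.coe_ne_top hconv
      with gm hgm
    have hmin := hp ((1 - a) • p + a • z)
    rw [hgp, ← hgm, ← WithTop.coe_mul, ← WithTop.coe_mul, ← WithTop.coe_add,
      ← WithTop.coe_add, WithTop.coe_le_coe] at hmin
    rw [WithTop.coe_le_coe] at hconv
    have hsplit : u - ((1 - a) • p + a • z) = (u - p) - a • (z - p) := by module
    rw [hsplit, norm_sub_sq_real (u - p), real_inner_smul_right, norm_smul,
      Real.norm_of_nonneg ha0.le] at hmin
    have : a * ⟪u - p, z - p⟫ ≤ a * (η * (gz - gp) + a / 2 * ‖z - p‖ ^ 2) := by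
      nlinarith [mul_le_mul_of_nonneg_left hconv hη]
    exact le_of_mul_le_mul_left this ha0
  have hlim : Tendsto (fun a : ℝ => η * (gz - gp) + a / 2 * ‖z - p‖ ^ 2) (𝓝[>] 0)
      (𝓝 (η * (gz - gp))) := by
    apply tendsto_nhdsWithin_of_tendsto_nhds
    simpa using ((continuous_id.div_const 2).mul_const (‖z - p‖ ^ 2)).const_add
      (η * (gz - gp)) |>.tendsto 0
  exact ge_of_tendsto hlim (eventually_of_mem (Ioo_mem_nhdsGT zero_lt_one) hsmall)

theorem proxGrad_sufficient_decrease (hg : ConvexWithTop g) (hη : 0 < η)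
    (hφ : ∀ z ∈ {z | g z ≠ ⊤}, HasGradientAt φ (φ' z) z)
    (hlip : ∀ a ∈ {z | g z ≠ ⊤}, ∀ b ∈ {z | g z ≠ ⊤}, ‖φ' a - φ' b‖ ≤ L * ‖a - b‖)
    {y : EuclideanSpace ℝ (Fin n)} (hy : g y ≠ ⊤) (hp : IsProxPt g η (y - η • φ' y) p) :
    g p ≠ ⊤ ∧
      φ p + (g p).untopD 0 + (η⁻¹ - L / 2) * ‖y - p‖ ^ 2 ≤ φ y + (g y).untopD 0 := by
  have hpdom := hp.ne_top hη hy
  refine ⟨hpdom, ?_⟩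
  have hdesc :=
    le_add_inner_add_sq_of_lipschitzOn_gradient hg.convex_setOf_ne_top hφ hlip hy hpdom
  lift g y to ℝ using hy with gy hgy
  lift g p to ℝ using hpdom with gp hgp
  have hvar := hp.inner_le hg hη.le hgp.symm hgy.symm
  have hsplit : y - η • φ' y - p = (y - p) - η • φ' y := by module
  rw [hsplit, inner_sub_left, real_inner_smul_left, real_inner_self_eq_norm_sq] at hvar
  have hgstep : gp + η⁻¹ * ‖y - p‖ ^ 2 ≤ gy + ⟪φ' y, y - p⟫ := by
    rw [← mul_le_mul_iff_right₀ hη, mul_add, mul_add, ← mul_assoc, mul_inv_cancel₀ hη.ne']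
    linarith
  rw [← neg_sub y p, inner_neg_right, norm_neg] at hdesc
  simp only [WithTop.untopD_coe]
  linarith

theorem proxGrad_decrease_of_lt_norm_proxRes (hg : ConvexWithTop g) (hη : 0 < η)
    (hprox : ∀ u, IsProxPt g η u (prox u)) (hηL : η * L ≤ 2)
    (hφ : ∀ z ∈ {z | g z ≠ ⊤}, HasGradientAt φ (φ' z) z)
    (hlip : ∀ a ∈ {z | g z ≠ ⊤}, ∀ b ∈ {z | g z ≠ ⊤}, ‖φ' a - φ' b‖ ≤ L * ‖a - b‖)
    {y : EuclideanSpace ℝ (Fin n)} (hy : g y ≠ ⊤) {r : ℝ} (hr0 : 0 ≤ r)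
    (hr : r < ‖proxRes prox η y (φ' y)‖) :
    g (prox (y - η • φ' y)) ≠ ⊤ ∧
      φ (prox (y - η • φ' y)) + (g (prox (y - η • φ' y))).untopD 0 +
        (2 - η * L) * η / 2 * r ^ 2 ≤ φ y + (g y).untopD 0 := by
  set p := prox (y - η • φ' y)
  obtain ⟨hpdom, hdec⟩ := proxGrad_sufficient_decrease hg hη hφ hlip hy (hprox _)
  refine ⟨hpdom, le_trans ?_ hdec⟩
  have hdist : η * r ≤ ‖y - p‖ := by
    rw [proxRes, norm_smul, Real.norm_of_nonneg (inv_nonneg.2 hη.le), ← div_eq_inv_mul,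
      lt_div_iff₀' hη] at hr
    exact hr.le
  have hcoef : (2 - η * L) * η / 2 * r ^ 2 = (η⁻¹ - L / 2) * (η * r) ^ 2 := by
    field_simp
  have hcoef_nonneg : 0 ≤ η⁻¹ - L / 2 := by
    rw [sub_nonneg, inv_eq_one_div, le_div_iff₀ hη]
    linarith
  rw [hcoef]
  gcongr

theorem proxGrad_iterates_decrease (hg : ConvexWithTop g) (hη : 0 < η)
    (hprox : ∀ u, IsProxPt g η u (prox u)) (hηL : η * L ≤ 2)
    (hφ : ∀ z ∈ {z | g z ≠ ⊤}, HasGradientAt φ (φ' z) z)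
    (hlip : ∀ a ∈ {z | g z ≠ ⊤}, ∀ b ∈ {z | g z ≠ ⊤}, ‖φ' a - φ' b‖ ≤ L * ‖a - b‖)
    {y : ℕ → EuclideanSpace ℝ (Fin n)} {τ : ℕ} {r : ℝ} (hr0 : 0 ≤ r)
    (hstep : ∀ k, 1 ≤ k → k ≤ τ → y (k + 1) = prox (y k - η • φ' (y k)))
    (hres : ∀ k, 1 ≤ k → k ≤ τ → r < ‖proxRes prox η (y k) (φ' (y k))‖)
    (hy : g (y 1) ≠ ⊤) :
    g (y (τ + 1)) ≠ ⊤ ∧ φ (y (τ + 1)) + (g (y (τ + 1))).untopD 0 +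
      τ * ((2 - η * L) * η / 2 * r ^ 2) ≤ φ (y 1) + (g (y 1)).untopD 0 := by
  refine add_mul_le_of_forall_step (D := {z | g z ≠ ⊤}) (Φ := fun z => φ z + (g z).untopD 0)
    (fun k hk1 hkτ hyk => ?_) hy
  rw [hstep k hk1 hkτ]
  exact proxGrad_decrease_of_lt_norm_proxRes hg hη hprox hηL hφ hlip hyk hr0 (hres k hk1 hkτ)

end proxGrad

section windowAvg

variable {F : Type*} [NormedAddCommGroup F] [NormedSpace ℝ F]

def windowAvg (a : ℤ → F) (w : ℕ) (t : ℤ) : F := (w : ℝ)⁻¹ • ∑ i ∈ Icc (t - w + 1) t, a i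

theorem card_Icc_window (w : ℕ) (t : ℤ) : #(Icc (t - w + 1) t) = w := by
  rw [Int.card_Icc]
  omega

theorem norm_windowAvg_le {a : ℤ → F} {w : ℕ} {t : ℤ} {C : ℝ} (hw : w ≠ 0)
    (ha : ∀ i ∈ Icc (t - w + 1) t, ‖a i‖ ≤ C) : ‖windowAvg a w t‖ ≤ C := by
  have hsum : ‖∑ i ∈ Icc (t - w + 1) t, a i‖ ≤ w * C := by
    simpa [card_Icc_window] using norm_sum_le_of_le _ ha
  rw [windowAvg, norm_smul, norm_inv, Real.norm_natCast, inv_mul_le_iff₀ (by positivity)]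
  exact hsum

theorem abs_windowAvg_le {a : ℤ → ℝ} {w : ℕ} {t : ℤ} {C : ℝ} (hw : w ≠ 0)
    (ha : ∀ i ∈ Icc (t - w + 1) t, |a i| ≤ C) : |windowAvg a w t| ≤ C :=
  norm_windowAvg_le (a := a) hw ha

theorem norm_windowAvg_sub_windowAvg_le {E : Type*} {f : ℤ → E → F} {w : ℕ} {t : ℤ} {x y : E}
    {C : ℝ} (hw : w ≠ 0) (hf : ∀ i ∈ Icc (t - w + 1) t, ‖f i x - f i y‖ ≤ C) :
    ‖windowAvg (f · x) w t - windowAvg (f · y) w t‖ ≤ C := by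
  simpa only [windowAvg, sum_sub_distrib, smul_sub] using norm_windowAvg_le hw hf

theorem windowAvg_sub_windowAvg_sub_one (a : ℤ → F) (w : ℕ) (t : ℤ) :
    windowAvg a w t - windowAvg a w (t - 1) = (w : ℝ)⁻¹ • (a t - a (t - w)) := by
  have hnew : Icc (t - w) t = insert (t - w) (Icc (t - w + 1) t) := by
    ext i; simp only [mem_Icc, mem_insert]; omega
  have hold : Icc (t - w) t = insert t (Icc (t - 1 - w + 1) (t - 1)) := by
    ext i; simp only [mem_Icc, mem_insert]; omega
  have hsum : a (t - w) + ∑ i ∈ Icc (t - w + 1) t, a i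
      = a t + ∑ i ∈ Icc (t - 1 - w + 1) (t - 1), a i := by
    rw [← sum_insert (by simp), ← hnew, hold, sum_insert (by simp)]
  rw [windowAvg, windowAvg, ← smul_sub]
  congr 1
  rw [sub_eq_sub_iff_add_eq_add, add_comm, hsum]

theorem windowAvg_le_windowAvg_sub_one_add {a : ℤ → ℝ} {w : ℕ} {t : ℤ} {M : ℝ}
    (hnew : |a t| ≤ M) (hold : |a (t - w)| ≤ M) :
    windowAvg a w t ≤ windowAvg a w (t - 1) + 2 * M / w := by
  have hdiff := windowAvg_sub_windowAvg_sub_one a w t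
  have hle : (w : ℝ)⁻¹ * (a t - a (t - w)) ≤ (w : ℝ)⁻¹ * (2 * M) := by
    gcongr
    linarith [(abs_le.1 hnew).2, (abs_le.1 hold).1]
  rw [smul_eq_mul] at hdiff
  rw [div_eq_inv_mul]
  linarith

theorem windowAvg_eq_zero {a : ℤ → F} {t : ℤ} (ha : ∀ i ≤ t, a i = 0) (w : ℕ) :
    windowAvg a w t = 0 := by
  rw [windowAvg, sum_eq_zero fun i hi => ha i (mem_Icc.1 hi).2, smul_zero]

theorem hasGradientAt_windowAvg {E : Type*} [NormedAddCommGroup E] [InnerProductSpace ℝ E]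
    [CompleteSpace E] {f : ℤ → E → ℝ} {f' : ℤ → E → E} {z : E}
    (hf : ∀ i, HasGradientAt (f i) (f' i z) z) (w : ℕ) (t : ℤ) :
    HasGradientAt (fun z => windowAvg (f · z) w t) (windowAvg (f' · z) w t) z := by
  simp only [windowAvg, hasGradientAt_iff_hasFDerivAt, map_smul, map_sum]
  exact (HasFDerivAt.fun_sum fun i _ => (hf i).hasFDerivAt).const_smul ((w : ℝ)⁻¹)

end windowAvg

theorem stmt4_general {n : ℕ} (g : EuclideanSpace ℝ (Fin n) → WithTop ℝ)
    (hg : ProperConvexLsc g) (hg_nonneg : ∀ z, (0 : WithTop ℝ) ≤ g z)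
    (prox : EuclideanSpace ℝ (Fin n) → EuclideanSpace ℝ (Fin n))
    (L η δ M : ℝ) (hL : 0 < L) (hη : 0 < η) (hη' : η < 2 / L) (hδ : 0 < δ) (hM : 0 < M)
    (hprox : IsProxFun g η prox)
    (T w : ℕ) (hw1 : 1 ≤ w)
    (f : ℤ → EuclideanSpace ℝ (Fin n) → ℝ)
    (f' : ℤ → EuclideanSpace ℝ (Fin n) → EuclideanSpace ℝ (Fin n))
    (hf0 : ∀ t ≤ (0 : ℤ), ∀ z, f t z = 0) (hf'0 : ∀ t ≤ (0 : ℤ), ∀ z, f' t z = 0)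
    (hgrad : ∀ t z, HasGradientAt (f t) (f' t z) z)
    (hsmooth : ∀ t ∈ Finset.Icc (1 : ℤ) T, ∀ z₁ z₂ : EuclideanSpace ℝ (Fin n),
      g z₁ ≠ ⊤ → g z₂ ≠ ⊤ → ‖f' t z₁ - f' t z₂‖ ≤ L * ‖z₁ - z₂‖)
    (hbound : ∀ t ∈ Finset.Icc (1 : ℤ) T, ∀ z, g z ≠ ⊤ → |f t z| ≤ M)
    (x : ℤ → EuclideanSpace ℝ (Fin n)) (y : ℤ → ℕ → EuclideanSpace ℝ (Fin n)) (τ : ℤ → ℕ)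
    (g1 : ℝ) (hg1 : g (x 1) = (g1 : WithTop ℝ))
    (hinit : ∀ t ∈ Finset.Icc (1 : ℤ) T, y t 1 = x t)
    (hstep : ∀ t ∈ Finset.Icc (1 : ℤ) T, ∀ k, 1 ≤ k → k ≤ τ t →
      y t (k + 1) =
        prox (y t k - η • ((w : ℝ)⁻¹ • ∑ i ∈ Finset.Icc (t - w + 1) t, f' i (y t k))))
    (hres : ∀ t ∈ Finset.Icc (1 : ℤ) T, ∀ k, 1 ≤ k → k ≤ τ t →
      δ / w <
        ‖proxRes prox η (y t k) ((w : ℝ)⁻¹ • ∑ i ∈ Finset.Icc (t - w + 1) t, f' i (y t k))‖)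
    (hnext : ∀ t ∈ Finset.Icc (1 : ℤ) T, x (t + 1) = y t (τ t + 1)) :
    (∑ t ∈ Finset.Icc (1 : ℤ) T, (τ t : ℝ)) ≤
      2 * w * ((w : ℝ) * (g1 + M) + 2 * M * T) / ((2 - η * L) * η * δ ^ 2) := by
  set D := {z | g z ≠ ⊤}
  set S : ℤ → EuclideanSpace ℝ (Fin n) → ℝ := fun t z => windowAvg (f · z) w t
  -- only evaluated on `D`, where `untopD 0` does not hide the value `⊤`
  set Φ := fun t z => S t z + (g z).untopD 0
  set c := (2 - η * L) * η / 2 * (δ / w) ^ 2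
  have hw : w ≠ 0 := by omega
  have hηL : η * L < 2 := by rwa [lt_div_iff₀ hL] at hη'
  have hfM : ∀ i ≤ (T : ℤ), ∀ z ∈ D, |f i z| ≤ M :=
    Int.forall_le_of_forall_Icc_one (fun i hi z _ => by simp [hf0 i hi, hM.le]) hbound
  have hf'L : ∀ i ≤ (T : ℤ), ∀ a ∈ D, ∀ b ∈ D, ‖f' i a - f' i b‖ ≤ L * ‖a - b‖ :=
    Int.forall_le_of_forall_Icc_one
      (fun i hi a _ b _ => by simpa [hf'0 i hi] using mul_nonneg hL.le (norm_nonneg _))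
      fun i hi a ha b hb => hsmooth i hi a b ha hb
  have hround : ∀ t ∈ Icc (1 : ℤ) T, x t ∈ D →
      x (t + 1) ∈ D ∧ Φ t (x (t + 1)) + τ t * c ≤ Φ t (x t) := by
    intro t ht hxt
    rw [hnext t ht, ← hinit t ht]
    exact proxGrad_iterates_decrease hg.2.2 hη (fun u => (hprox u).1) hηL.le
      (φ' := fun z => windowAvg (f' · z) w t) (fun z _ => hasGradientAt_windowAvg (hgrad · z) w t)
      (fun a ha b hb => norm_windowAvg_sub_windowAvg_le hw fun i hi =>
        hf'L i ((mem_Icc.1 hi).2.trans (mem_Icc.1 ht).2) a ha b hb)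
      (by positivity) (hstep t ht) (hres t ht) (hinit t ht ▸ hxt)
  have hdrift : ∀ t ∈ Icc (1 : ℤ) T, ∀ z ∈ D, Φ t z ≤ Φ (t - 1) z + 2 * M / w := by
    intro t ht z hz
    have := windowAvg_le_windowAvg_sub_one_add (a := (f · z)) (hfM t (mem_Icc.1 ht).2 z hz)
      (hfM (t - w) (by linarith [(mem_Icc.1 ht).2]) z hz)
    simp only [Φ, S]
    linarith
  obtain ⟨hxT, hsum⟩ := sum_add_le_of_forall_round T hround hdrift (by simp [D, hg1])
  have hΦ0 : Φ 0 (x 1) = g1 := by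
    simp [Φ, S, windowAvg_eq_zero fun i hi => hf0 i hi (x 1), hg1]
  have hΦT : -M ≤ Φ T (x (T + 1)) :=
    (neg_le_of_abs_le (abs_windowAvg_le hw fun i hi => hfM i (mem_Icc.1 hi).2 _ hxT)).trans
      (le_add_of_nonneg_right ((WithTop.le_untopD_iff fun _ => le_rfl).2 (hg_nonneg _)))
  rw [← sum_mul, hΦ0] at hsum
  have hc : 0 < c := by have := sub_pos.2 hηL; positivity
  calc (∑ t ∈ Icc (1 : ℤ) T, (τ t : ℝ)) ≤ (g1 + M + T * (2 * M / w)) / c := by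
        rw [le_div_iff₀ hc]
        linarith
    _ = 2 * w * ((w : ℝ) * (g1 + M) + 2 * M * T) / ((2 - η * L) * η * δ ^ 2) := by
        simp only [c]
        field_simp

/-- Theorem 3: bound on the total number of prox-grad operations of the
time-smoothed online prox-grad method.  For each round `t`, the inner loop starts at
`y_t¹ = x_t`, performs `τ_t` prox-grad steps on the sliding average `S_{t,w}` (each taken
while the residual exceeds `δ/w`), and outputs `x_{t+1} = y_t^{τ_t+1}`.  Then
`Σ_t τ_t ≤ 2w(w(g(x₁)+M) + 2MT)/((2 − ηL)ηδ²)`. -/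
theorem stmt4 {n : ℕ} (g : EuclideanSpace ℝ (Fin n) → WithTop ℝ)
    (hg : ProperConvexLsc g) (hg_nonneg : ∀ z, (0 : WithTop ℝ) ≤ g z)
    (prox : EuclideanSpace ℝ (Fin n) → EuclideanSpace ℝ (Fin n))
    (L η δ M : ℝ) (hL : 0 < L) (hη : 0 < η) (hη' : η < 2 / L) (hδ : 0 < δ) (hM : 0 < M)
    (hprox : IsProxFun g η prox)
    (T w : ℕ) (hT : 1 ≤ T) (hw1 : 1 ≤ w) (hwT : w ≤ T)
    (f : ℤ → EuclideanSpace ℝ (Fin n) → ℝ)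
    (f' : ℤ → EuclideanSpace ℝ (Fin n) → EuclideanSpace ℝ (Fin n))
    (hf0 : ∀ t ≤ (0 : ℤ), ∀ z, f t z = 0) (hf'0 : ∀ t ≤ (0 : ℤ), ∀ z, f' t z = 0)
    (hgrad : ∀ t z, HasGradientAt (f t) (f' t z) z)
    (hsmooth : ∀ t ∈ Finset.Icc (1 : ℤ) T, ∀ z₁ z₂ : EuclideanSpace ℝ (Fin n),
      g z₁ ≠ ⊤ → g z₂ ≠ ⊤ → ‖f' t z₁ - f' t z₂‖ ≤ L * ‖z₁ - z₂‖)
    (hbound : ∀ t ∈ Finset.Icc (1 : ℤ) T, ∀ z, g z ≠ ⊤ → |f t z| ≤ M)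
    (x : ℤ → EuclideanSpace ℝ (Fin n)) (y : ℤ → ℕ → EuclideanSpace ℝ (Fin n)) (τ : ℤ → ℕ)
    (g1 : ℝ) (hg1 : g (x 1) = (g1 : WithTop ℝ))
    (hinit : ∀ t ∈ Finset.Icc (1 : ℤ) T, y t 1 = x t)
    (hstep : ∀ t ∈ Finset.Icc (1 : ℤ) T, ∀ k, 1 ≤ k → k ≤ τ t →
      y t (k + 1) =
        prox (y t k - η • ((w : ℝ)⁻¹ • ∑ i ∈ Finset.Icc (t - w + 1) t, f' i (y t k))))
    (hres : ∀ t ∈ Finset.Icc (1 : ℤ) T, ∀ k, 1 ≤ k → k ≤ τ t →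
      δ / w <
        ‖proxRes prox η (y t k) ((w : ℝ)⁻¹ • ∑ i ∈ Finset.Icc (t - w + 1) t, f' i (y t k))‖)
    (hnext : ∀ t ∈ Finset.Icc (1 : ℤ) T, x (t + 1) = y t (τ t + 1)) :
    (∑ t ∈ Finset.Icc (1 : ℤ) T, (τ t : ℝ)) ≤
      2 * w * ((w : ℝ) * (g1 + M) + 2 * M * T) / ((2 - η * L) * η * δ ^ 2) :=
  stmt4_general g hg hg_nonneg prox L η δ M hL hη hη' hδ hM hprox T w hw1 f f' hf0 hf'0 hgrad
    hsmooth hbound x y τ g1 hg1 hinit hstep hres hnext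
end
end

section
/- (Inexact sufficient decrease.) Let g : ℝⁿ → ℝ ∪ {+∞} be proper, convex and lower semicontinuous, let S : ℝⁿ → ℝ be differentiable and L-smooth on dom g, and let η > 0. For any y ∈ dom g and any G ∈ ℝⁿ, setting y⁺ = prox_{ηg}(y − η G), one has S(y) + g(y) − S(y⁺) − g(y⁺) ≥ ⟨G − ∇S(y), y⁺ − y⟩ + ((1 − ηL)/(2η))·‖y⁺ − y‖². -/
/-!
Testing the prox minimality of `y⁺` against the competitor `y` gives
`g(y⁺) + ⟨G, y⁺ − y⟩ + ‖y⁺ − y‖²/(2η) ≤ g(y)`, and in particular `y⁺ ∈ dom g`. Since `dom g` is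
convex, the descent lemma `S(y⁺) ≤ S(y) + ⟨∇S(y), y⁺ − y⟩ + (L/2)‖y⁺ − y‖²` holds along the
segment from `y` to `y⁺`; adding the two inequalities gives the claim.
-/

noncomputable section

open Finset MeasureTheory
open scoped RealInnerProductSpace

open Set

section Descent

variable {E : Type*} [NormedAddCommGroup E] [InnerProductSpace ℝ E] [CompleteSpace E]

theorem HasGradientAt.hasDerivAt_comp_add_smul {f : E → ℝ} {f' x v : E} {t : ℝ}
    (h : HasGradientAt f f' (x + t • v)) :
    HasDerivAt (fun s : ℝ => f (x + s • v)) ⟪f', v⟫ t := by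
  have hline : HasDerivAt (fun s : ℝ => x + s • v) v t := by
    simpa using ((hasDerivAt_id t).smul_const v).const_add x
  have hcomp := h.hasFDerivAt.comp_hasDerivAt t hline
  rw [InnerProductSpace.toDual_apply_apply] at hcomp
  exact hcomp

theorem Convex.apply_le_add_inner_add_sq_of_gradient_lipschitz {s : Set E} (hs : Convex ℝ s)
    {f : E → ℝ} {f' : E → E} {L : ℝ} (hf : ∀ x ∈ s, HasGradientAt f (f' x) x)
    (hL : ∀ x ∈ s, ∀ y ∈ s, ‖f' x - f' y‖ ≤ L * ‖x - y‖) {x y : E} (hx : x ∈ s) (hy : y ∈ s) :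
    f y ≤ f x + ⟪f' x, y - x⟫ + L / 2 * ‖y - x‖ ^ 2 := by
  set v := y - x
  set ψ : ℝ → ℝ := fun t => f (x + t • v) - t * ⟪f' x, v⟫ - L * t ^ 2 / 2 * ‖v‖ ^ 2
  have hψ : ∀ t ∈ Icc (0 : ℝ) 1,
      HasDerivAt ψ (⟪f' (x + t • v) - f' x, v⟫ - L * t * ‖v‖ ^ 2) t := by
    intro t ht
    have hquad : HasDerivAt (fun s : ℝ => L * s ^ 2 / 2 * ‖v‖ ^ 2) (L * t * ‖v‖ ^ 2) t := by
      refine ((((hasDerivAt_pow 2 t).const_mul L).div_const 2).mul_const (‖v‖ ^ 2)).congr_deriv ?_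
      simp only [Nat.cast_ofNat, Nat.add_one_sub_one, pow_one]
      ring
    refine ((((hf _ (hs.add_smul_sub_mem hx hy ht)).hasDerivAt_comp_add_smul).sub
      ((hasDerivAt_id t).mul_const ⟪f' x, v⟫)).sub hquad).congr_deriv ?_
    rw [inner_sub_left, one_mul]
  have hψ'_nonpos : ∀ t ∈ Icc (0 : ℝ) 1, ⟪f' (x + t • v) - f' x, v⟫ - L * t * ‖v‖ ^ 2 ≤ 0 := by
    intro t ht
    have hlip := hL _ (hs.add_smul_sub_mem hx hy ht) x hx
    rw [add_sub_cancel_left, norm_smul, Real.norm_of_nonneg ht.1] at hlip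
    have := (real_inner_le_norm _ _).trans (mul_le_mul_of_nonneg_right hlip (norm_nonneg v))
    linarith
  have hanti : AntitoneOn ψ (Icc 0 1) :=
    antitoneOn_of_hasDerivWithinAt_nonpos (convex_Icc 0 1)
      (fun t ht => (hψ t ht).continuousAt.continuousWithinAt)
      (fun t ht => (hψ t (interior_subset ht)).hasDerivWithinAt)
      (fun t ht => hψ'_nonpos t (interior_subset ht))
  have h01 := hanti (left_mem_Icc.mpr zero_le_one) (right_mem_Icc.mpr zero_le_one) zero_le_one
  have hψ0 : ψ 0 = f x := by simp [ψ]
  have hψ1 : ψ 1 = f y - ⟪f' x, v⟫ - L / 2 * ‖v‖ ^ 2 := by simp [ψ, v]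
  linarith

end Descent

theorem ProperConvexLsc.convex_dom {n : ℕ} {g : EuclideanSpace ℝ (Fin n) → WithTop ℝ}
    (hg : ProperConvexLsc g) : Convex ℝ {x | g x ≠ ⊤} := by
  intro x hx y hy a b ha hb hab
  obtain ⟨gx, hgx⟩ := WithTop.ne_top_iff_exists.mp hx
  obtain ⟨gy, hgy⟩ := WithTop.ne_top_iff_exists.mp hy
  have hconv := hg.2.2 x y a b ha hb hab
  rw [← hgx, ← hgy] at hconv
  exact ne_top_of_le_ne_top (by exact_mod_cast WithTop.coe_ne_top) hconv

theorem IsProxPt.add_inner_add_sq_le {n : ℕ} {g : EuclideanSpace ℝ (Fin n) → WithTop ℝ} {η : ℝ}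
    {y G p : EuclideanSpace ℝ (Fin n)} (hp : IsProxPt g η (y - η • G) p) (hη : 0 < η)
    (hy : g y ≠ ⊤) :
    g p + ((⟪G, p - y⟫ + ‖p - y‖ ^ 2 / (2 * η) : ℝ) : WithTop ℝ) ≤ g y := by
  obtain ⟨b, hb⟩ := WithTop.ne_top_iff_exists.mp hy
  have hmin := hp y
  have hp_ne_top : g p ≠ ⊤ := by
    intro htop
    rw [htop, ← hb, WithTop.mul_top (by exact_mod_cast hη.ne'), top_add] at hmin
    exact WithTop.not_top_le_coe _ (by exact_mod_cast hmin)
  obtain ⟨a, ha⟩ := WithTop.ne_top_iff_exists.mp hp_ne_top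
  rw [← ha, ← hb] at hmin ⊢
  norm_cast at hmin ⊢
  have hnorm_p : ‖y - η • G - p‖ ^ 2 = ‖p - y‖ ^ 2 + 2 * η * ⟪G, p - y⟫ + η ^ 2 * ‖G‖ ^ 2 := by
    rw [show y - η • G - p = -((p - y) + η • G) by abel, norm_neg, norm_add_sq_real,
      real_inner_smul_right, real_inner_comm, norm_smul, Real.norm_of_nonneg hη.le]
    ring
  have hnorm_y : ‖y - η • G - y‖ ^ 2 = η ^ 2 * ‖G‖ ^ 2 := by
    rw [sub_sub_cancel_left, norm_neg, norm_smul, Real.norm_of_nonneg hη.le, mul_pow]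
  rw [hnorm_p, hnorm_y] at hmin
  have hscaled : η * (a + (⟪G, p - y⟫ + ‖p - y‖ ^ 2 / (2 * η))) ≤ η * b := by
    have hcancel : η * (‖p - y‖ ^ 2 / (2 * η)) = ‖p - y‖ ^ 2 / 2 := by field_simp
    linarith
  exact le_of_mul_le_mul_left hscaled hη

/-- inexact sufficient decrease: for `y ∈ dom g`, `G ∈ ℝⁿ` and
`y⁺ = prox_{ηg}(y − ηG)`, one has
`S(y) + g(y) − S(y⁺) − g(y⁺) ≥ ⟨G − ∇S(y), y⁺ − y⟩ + ((1 − ηL)/(2η))‖y⁺ − y‖²`. -/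
theorem stmt5 {n : ℕ} (g : EuclideanSpace ℝ (Fin n) → WithTop ℝ)
    (hg : ProperConvexLsc g)
    (prox : EuclideanSpace ℝ (Fin n) → EuclideanSpace ℝ (Fin n))
    (L η : ℝ) (hη : 0 < η)
    (hprox : IsProxFun g η prox)
    (S : EuclideanSpace ℝ (Fin n) → ℝ) (S' : EuclideanSpace ℝ (Fin n) → EuclideanSpace ℝ (Fin n))
    (hgrad : ∀ x, HasGradientAt S (S' x) x)
    (hsmooth : ∀ x y : EuclideanSpace ℝ (Fin n), g x ≠ ⊤ → g y ≠ ⊤ →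
      ‖S' x - S' y‖ ≤ L * ‖x - y‖)
    (y G yp : EuclideanSpace ℝ (Fin n)) (hy : g y ≠ ⊤) (hyp : yp = prox (y - η • G)) :
    ((S yp : ℝ) : WithTop ℝ) + g yp +
        ((⟪G - S' y, yp - y⟫ + (1 - η * L) / (2 * η) * ‖yp - y‖ ^ 2 : ℝ) : WithTop ℝ) ≤
      ((S y : ℝ) : WithTop ℝ) + g y := by
  have hprox_le := hyp ▸ (hprox (y - η • G)).1.add_inner_add_sq_le hη hy
  have hyp_ne_top : g yp ≠ ⊤ := (WithTop.add_ne_top.mp (ne_top_of_le_ne_top hy hprox_le)).1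
  have hdescent := hg.convex_dom.apply_le_add_inner_add_sq_of_gradient_lipschitz
    (fun x _ => hgrad x) (fun x hx z hz => hsmooth x z hx hz) hy hyp_ne_top
  obtain ⟨a, ha⟩ := WithTop.ne_top_iff_exists.mp hyp_ne_top
  obtain ⟨b, hb⟩ := WithTop.ne_top_iff_exists.mp hy
  rw [← ha, ← hb] at hprox_le ⊢
  norm_cast at hprox_le ⊢
  have hcoeff : (1 - η * L) / (2 * η) * ‖yp - y‖ ^ 2 =
      ‖yp - y‖ ^ 2 / (2 * η) - L / 2 * ‖yp - y‖ ^ 2 := by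
    field_simp
  rw [inner_sub_left, hcoeff]
  linarith
end
end

section
/- (Smoothed local equilibrium with a perfect oracle.) Let m ≥ 1 players be given, where player i has a proper, convex, lower semicontinuous regularizer g_i : ℝ^{n_i} → ℝ ∪ {+∞}, differentiable loss functions f_t^i : ℝ^{n_i} → ℝ (t = 1, …, T, with f_t^i ≡ 0 for t ≤ 0), and iterates x_t^i ∈ ℝ^{n_i}. Let η > 0, δ > 0, c > 0, w ≥ 2, T = w², and for each i and t set r_t^i = ‖P_η^{g_i}(x_t^i; ∇S^i_{t,w}(x_t^i))‖², where S^i_{t,w} is the sliding average of the f^i's. Suppose that for each player i the local regret bound Σ_{t=1}^T r_t^i ≤ (2T/w²)(δ² + c) holds, and that 2m(δ² + c) ≤ ε·w·(w − 1). Then there exists t* ∈ {w, …, T} such that Σ_{i=1}^m r_{t*}^i ≤ ε, i.e., the joint strategy at time t* is an ε-(η, w) smoothed local equilibrium. -/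
noncomputable section

open Finset MeasureTheory
open scoped RealInnerProductSpace

/-- smoothed local equilibrium with a perfect oracle: in an `m`-player game
where player `i` has regularizer `g i`, losses `f i t` (zero for `t ≤ 0`), iterates `x i t`,
and per-round squared residuals
`r t i = ‖P_η^{gᵢ}(xᵢ_t; ∇Sᵢ_{t,w}(xᵢ_t))‖²`, if each player's local regret satisfies
`Σ_{t=1}^T r t i ≤ (2T/w²)(δ² + c)` with `T = w²`, `w ≥ 2`, and
`2m(δ² + c) ≤ ε·w·(w − 1)`, then some `t* ∈ {w, …, T}` is an `ε`-(η,w) smoothed local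
equilibrium: `Σ_i r_{t*} i ≤ ε`. -/
theorem stmt16 (m : ℕ) (hm : 1 ≤ m) (dim : Fin m → ℕ)
    (g : ∀ i : Fin m, EuclideanSpace ℝ (Fin (dim i)) → WithTop ℝ)
    (hg : ∀ i, ProperConvexLsc (g i))
    (prox : ∀ i : Fin m, EuclideanSpace ℝ (Fin (dim i)) → EuclideanSpace ℝ (Fin (dim i)))
    (η δ c ε : ℝ) (hη : 0 < η) (hδ : 0 < δ) (hc : 0 < c) (hε : 0 < ε)
    (hprox : ∀ i, IsProxFun (g i) η (prox i))
    (w T : ℕ) (hw : 2 ≤ w) (hT : T = w ^ 2)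
    (f : ∀ i : Fin m, ℤ → EuclideanSpace ℝ (Fin (dim i)) → ℝ)
    (f' : ∀ i : Fin m, ℤ → EuclideanSpace ℝ (Fin (dim i)) → EuclideanSpace ℝ (Fin (dim i)))
    (hf0 : ∀ i, ∀ t ≤ (0 : ℤ), ∀ z, f i t z = 0)
    (hf'0 : ∀ i, ∀ t ≤ (0 : ℤ), ∀ z, f' i t z = 0)
    (hgrad : ∀ i t z, HasGradientAt (f i t) (f' i t z) z)
    (x : ∀ i : Fin m, ℤ → EuclideanSpace ℝ (Fin (dim i)))
    (r : ℤ → Fin m → ℝ)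
    (hr : ∀ t (i : Fin m),
      r t i =
        ‖proxRes (prox i) η (x i t)
            ((w : ℝ)⁻¹ • ∑ j ∈ Finset.Icc (t - w + 1) t, f' i j (x i t))‖ ^ 2)
    (hreg : ∀ i : Fin m,
      ∑ t ∈ Finset.Icc (1 : ℤ) T, r t i ≤ 2 * (T : ℝ) / w ^ 2 * (δ ^ 2 + c))
    (hεw : 2 * (m : ℝ) * (δ ^ 2 + c) ≤ ε * w * ((w : ℝ) - 1)) :
    ∃ t ∈ Finset.Icc (w : ℤ) T, ∑ i : Fin m, r t i ≤ ε := by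
  by_contra hcon
  push_neg at hcon
  have hr0 : ∀ t i, 0 ≤ r t i := fun t i => by rw [hr]; positivity
  -- sum over the window
  have hsub : Finset.Icc (w : ℤ) (T : ℤ) ⊆ Finset.Icc (1 : ℤ) (T : ℤ) := by
    apply Finset.Icc_subset_Icc_left
    exact_mod_cast Nat.one_le_iff_ne_zero.mpr (by omega)
  have hsum1 : ∑ t ∈ Finset.Icc (w : ℤ) (T : ℤ), ∑ i : Fin m, r t i ≤
      2 * (m : ℝ) * (δ ^ 2 + c) := by
    calc ∑ t ∈ Finset.Icc (w : ℤ) (T : ℤ), ∑ i : Fin m, r t i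
        ≤ ∑ t ∈ Finset.Icc (1 : ℤ) (T : ℤ), ∑ i : Fin m, r t i :=
          Finset.sum_le_sum_of_subset_of_nonneg hsub
            (fun t _ _ => Finset.sum_nonneg fun i _ => hr0 t i)
      _ = ∑ i : Fin m, ∑ t ∈ Finset.Icc (1 : ℤ) (T : ℤ), r t i := Finset.sum_comm
      _ ≤ ∑ _i : Fin m, 2 * (T : ℝ) / w ^ 2 * (δ ^ 2 + c) :=
          Finset.sum_le_sum fun i _ => hreg i
      _ = (m : ℝ) * (2 * (T : ℝ) / w ^ 2 * (δ ^ 2 + c)) := by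
          simp [Finset.sum_const, mul_comm]
      _ = 2 * (m : ℝ) * (δ ^ 2 + c) := by
          have hw0 : ((w : ℝ)) ≠ 0 := by positivity
          subst hT; push_cast; field_simp
  have hwT : w ≤ T := by subst hT; nlinarith
  have hcard : ((Finset.Icc (w : ℤ) (T : ℤ)).card : ℝ) = (T : ℝ) - w + 1 := by
    rw [Int.card_Icc, show ((T : ℤ) + 1 - (w : ℤ)).toNat = T + 1 - w from by omega]
    push_cast [Nat.cast_sub (by omega : w ≤ T + 1)]
    ring
  have hlow : ε * ((T : ℝ) - w + 1) ≤ ∑ t ∈ Finset.Icc (w : ℤ) (T : ℤ), ∑ i : Fin m, r t i := by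
    rw [← hcard]
    calc ε * ((Finset.Icc (w : ℤ) (T : ℤ)).card : ℝ)
        = ∑ _t ∈ Finset.Icc (w : ℤ) (T : ℤ), ε := by
          rw [Finset.sum_const, nsmul_eq_mul, mul_comm]
      _ ≤ _ := Finset.sum_le_sum fun t ht => (hcon t ht).le
  have hstrict : ε * w * ((w : ℝ) - 1) < ε * ((T : ℝ) - w + 1) := by
    subst hT; push_cast; nlinarith [hε, (by exact_mod_cast hw : (2:ℝ) ≤ w)]
  linarith
end
end

section
/- (Linear regret for window size w = 1.) Let η ∈ (0, 1], let proj denote the metric projection of ℝ onto [−1, 1], and define the projected-gradient residual P_η(x; d) = (x − proj(x − η d))/η for x, d ∈ ℝ. Let ε₁, …, ε_T be i.i.d. random variables with P(ε_t = 1) = P(ε_t = −1) = 1/2, and let f_t(x) = ε_t·x, so ∇f_t(x) = ε_t. Let (x_t)_{t=1}^T be any predictable policy with values in [−1, 1], i.e., x_t is measurable with respect to σ(ε₁, …, ε_{t−1}) (x₁ deterministic). Then E[Σ_{t=1}^T |P_η(x_t; ε_t)|²] ≥ T/2; hence no online policy can achieve sublinear unsmoothed (w = 1) local regret in this constrained non-convex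 online setting. -/
/-!
Whatever the learner plays, `x_t` is independent of the fresh sign `ε_t`. At any feasible `x`
one of the two steps `x ∓ η` stays in `[-1, 1]`, and for that sign the projection is inactive,
so the residual equals the gradient `±1`. Hence the two possible squared residuals sum to at
least `1`, and averaging over the fair sign costs at least `1/2` per round.
-/

noncomputable section

open Finset MeasureTheory ProbabilityTheory

section

variable {Ω : Type*} [MeasurableSpace Ω] {μ : Measure Ω}

namespace ProbabilityTheory

lemma iIndepFun.indepFun_of_measurable_iSup {ι β γ : Type*} [MeasurableSpace β]
    [MeasurableSpace γ] {f : ι → Ω → β} (hf : iIndepFun f μ) (hmeas : ∀ i, Measurable (f i))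
    {S : Set ι} {i : ι} (hi : i ∉ S) {Y : Ω → γ}
    (hY : Measurable[⨆ j ∈ S, MeasurableSpace.comap (f j) (inferInstance : MeasurableSpace β)] Y) :
    IndepFun Y (f i) μ := by
  rw [IndepFun_iff_Indep]
  have hS : Indep (⨆ j ∈ S, MeasurableSpace.comap (f j) (inferInstance : MeasurableSpace β))
      (⨆ j ∈ ({i} : Set ι), MeasurableSpace.comap (f j) (inferInstance : MeasurableSpace β)) μ :=
    indep_iSup_of_disjoint (fun j => (hmeas j).comap_le) ((iIndepFun_iff_iIndep _ _ _).mp hf)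
      (Set.disjoint_singleton_right.mpr hi)
  refine indep_of_indep_of_le_left (indep_of_indep_of_le_right hS ?_) hY.comap_le
  exact le_biSup (fun j => MeasurableSpace.comap (f j) _) (Set.mem_singleton i)

/-- Conditioning on each value `e ∈ s` of `E` separately and discarding the rest of the
(nonnegative) integrand. -/
lemma IndepFun.sum_measureReal_mul_integral_le_integral {β γ : Type*} [MeasurableSpace β]
    [MeasurableSpace γ] [MeasurableSingletonClass γ] {X : Ω → β} {E : Ω → γ}
    (hXE : IndepFun X E μ) (hX : Measurable X) (hE : Measurable E) {g : β → γ → ℝ}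
    (hg : ∀ e, Measurable fun a => g a e) (hg0 : ∀ a e, 0 ≤ g a e)
    (hint : Integrable (fun ω => g (X ω) (E ω)) μ) (s : Finset γ) :
    ∑ e ∈ s, μ.real (E ⁻¹' {e}) * ∫ ω, g (X ω) e ∂μ ≤ ∫ ω, g (X ω) (E ω) ∂μ := by
  have hIndep : Indep (MeasurableSpace.comap E inferInstance)
      (MeasurableSpace.comap X inferInstance) μ := (IndepFun_iff_Indep _ _ _).mp hXE.symm
  have hfiber : ∀ e, MeasurableSet (E ⁻¹' {e}) := fun e => hE (measurableSet_singleton e)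
  calc ∑ e ∈ s, μ.real (E ⁻¹' {e}) * ∫ ω, g (X ω) e ∂μ
      = ∑ e ∈ s, ∫ ω in E ⁻¹' {e}, g (X ω) (E ω) ∂μ := by
        refine sum_congr rfl fun e _ => ?_
        rw [← hIndep.setIntegral_eq_mul hE.comap_le hX.aemeasurable
          ⟨{e}, measurableSet_singleton e, rfl⟩ (hg e).aestronglyMeasurable]
        exact setIntegral_congr_fun (hfiber e) fun ω hω => by rw [Set.mem_preimage.mp hω]
    _ = ∫ ω in ⋃ e ∈ s, E ⁻¹' {e}, g (X ω) (E ω) ∂μ :=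
        (integral_biUnion_finset s (fun e _ => hfiber e)
          (fun _ _ _ _ hne => (Set.disjoint_singleton.mpr hne).preimage E)
          (fun _ _ => hint.integrableOn)).symm
    _ ≤ ∫ ω, g (X ω) (E ω) ∂μ :=
        setIntegral_le_integral hint (ae_of_all _ fun ω => hg0 _ _)

end ProbabilityTheory

/-- `P_η(x; d)` for the constraint set `[-1, 1]`. -/
def projGradResidual (η x d : ℝ) : ℝ :=
  (x - max (-1) (min 1 (x - η * d))) / η

lemma continuous_projGradResidual (η : ℝ) :
    Continuous fun p : ℝ × ℝ => projGradResidual η p.1 p.2 := by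
  unfold projGradResidual
  fun_prop

lemma projGradResidual_eq_of_mem {η x d : ℝ} (hη : η ≠ 0) (h : x - η * d ∈ Set.Icc (-1) 1) :
    projGradResidual η x d = d := by
  rw [projGradResidual, min_eq_right h.2, max_eq_right h.1, sub_sub_cancel,
    mul_div_cancel_left₀ d hη]

lemma projGradResidual_sq_le (η : ℝ) {x : ℝ} (hx : x ∈ Set.Icc (-1) 1) (d : ℝ) :
    projGradResidual η x d ^ 2 ≤ 4 / η ^ 2 := by
  have hproj : max (-1) (min 1 (x - η * d)) ∈ Set.Icc (-1 : ℝ) 1 :=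
    ⟨le_max_left _ _, max_le (by norm_num) (min_le_left _ _)⟩
  rw [projGradResidual, div_pow]
  gcongr
  nlinarith [hx.1, hx.2, hproj.1, hproj.2]

lemma one_le_projGradResidual_sq_add_sq {η x : ℝ} (hη0 : 0 < η) (hη1 : η ≤ 1)
    (hx : x ∈ Set.Icc (-1) 1) :
    1 ≤ projGradResidual η x 1 ^ 2 + projGradResidual η x (-1) ^ 2 := by
  rcases le_total 0 x with hx0 | hx0
  · have hstep : x - η * 1 ∈ Set.Icc (-1) 1 := ⟨by linarith [hx.1], by linarith [hx.2]⟩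
    rw [projGradResidual_eq_of_mem hη0.ne' hstep]
    nlinarith [sq_nonneg (projGradResidual η x (-1))]
  · have hstep : x - η * (-1) ∈ Set.Icc (-1) 1 := ⟨by linarith [hx.1], by linarith [hx.2]⟩
    rw [projGradResidual_eq_of_mem hη0.ne' hstep]
    nlinarith [sq_nonneg (projGradResidual η x 1)]

lemma integrable_projGradResidual_sq [IsFiniteMeasure μ] (η : ℝ) {X D : Ω → ℝ} (hX : Measurable X) (hD : Measurable D)
    (hX_mem : ∀ ω, X ω ∈ Set.Icc (-1) 1) :
    Integrable (fun ω => projGradResidual η (X ω) (D ω) ^ 2) μ := by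
  refine Integrable.of_bound (((continuous_projGradResidual η).measurable.comp
    (hX.prodMk hD)).pow_const 2).aestronglyMeasurable (4 / η ^ 2) (ae_of_all _ fun ω => ?_)
  rw [Real.norm_eq_abs, abs_of_nonneg (sq_nonneg _)]
  exact projGradResidual_sq_le η (hX_mem ω) (D ω)

lemma half_le_integral_projGradResidual_sq [IsProbabilityMeasure μ] {η : ℝ} (hη0 : 0 < η) (hη1 : η ≤ 1) {X E : Ω → ℝ}
    (hXE : IndepFun X E μ) (hX : Measurable X) (hE : Measurable E)
    (hX_mem : ∀ ω, X ω ∈ Set.Icc (-1) 1)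
    (hE1 : μ {ω | E ω = 1} = 1 / 2) (hEm1 : μ {ω | E ω = -1} = 1 / 2) :
    1 / 2 ≤ ∫ ω, projGradResidual η (X ω) (E ω) ^ 2 ∂μ := by
  have hint : ∀ d : ℝ, Integrable (fun ω => projGradResidual η (X ω) d ^ 2) μ := fun d =>
    integrable_projGradResidual_sq η hX measurable_const hX_mem
  have hcond := hXE.sum_measureReal_mul_integral_le_integral hX hE
    (g := fun a e => projGradResidual η a e ^ 2)
    (fun e => ((continuous_projGradResidual η).comp (continuous_id.prodMk continuous_const)
      |>.pow 2).measurable)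
    (fun _ _ => sq_nonneg _) (integrable_projGradResidual_sq η hX hE hX_mem) {1, -1}
  have hfair : ∀ e : ℝ, μ {ω | E ω = e} = 1 / 2 → μ.real (E ⁻¹' {e}) = 1 / 2 := fun e he => by
    simp only [measureReal_def, Set.preimage, Set.mem_singleton_iff, he, ENNReal.toReal_div]
    norm_num
  rw [sum_pair (by norm_num), hfair 1 hE1, hfair (-1) hEm1] at hcond
  have hboth : 1 ≤ (∫ ω, projGradResidual η (X ω) 1 ^ 2 ∂μ) +
      ∫ ω, projGradResidual η (X ω) (-1) ^ 2 ∂μ := by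
    rw [← integral_add (hint 1) (hint (-1))]
    calc (1 : ℝ) = ∫ _, (1 : ℝ) ∂μ := by simp
      _ ≤ _ := integral_mono (integrable_const 1) ((hint 1).add (hint (-1)))
          fun ω => one_le_projGradResidual_sq_add_sq hη0 hη1 (hX_mem ω)
  linarith

end

theorem stmt17_general {Ω : Type*} [MeasurableSpace Ω] (μ : Measure Ω) [IsProbabilityMeasure μ]
    (η : ℝ) (hη0 : 0 < η) (hη1 : η ≤ 1)
    (proj : ℝ → ℝ) (hproj : ∀ s : ℝ, proj s = max (-1) (min 1 s))
    (T : ℕ)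
    (εs : ℕ → Ω → ℝ) (hmeas : ∀ t, Measurable (εs t))
    (hindep : iIndepFun εs μ)
    (hdist1 : ∀ t ∈ Finset.Icc 1 T, μ {ω | εs t ω = 1} = 1 / 2)
    (hdistm : ∀ t ∈ Finset.Icc 1 T, μ {ω | εs t ω = -1} = 1 / 2)
    (x : ℕ → Ω → ℝ)
    (hrange : ∀ t ω, x t ω ∈ Set.Icc (-1 : ℝ) 1)
    (hpred : ∀ t ∈ Finset.Icc 1 T,
      Measurable[⨆ s ∈ Set.Icc 1 (t - 1), MeasurableSpace.comap (εs s)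
        (inferInstance : MeasurableSpace ℝ)] (x t)) :
    (T : ℝ) / 2 ≤
      ∫ ω, (∑ t ∈ Finset.Icc 1 T, ((x t ω - proj (x t ω - η * εs t ω)) / η) ^ 2) ∂μ := by
  obtain rfl : proj = fun s => max (-1) (min 1 s) := funext hproj
  have hx : ∀ t ∈ Icc 1 T, Measurable (x t) := fun t ht =>
    (hpred t ht).mono (iSup₂_le fun s _ => (hmeas s).comap_le) le_rfl
  change _ ≤ ∫ ω, ∑ t ∈ Icc 1 T, projGradResidual η (x t ω) (εs t ω) ^ 2 ∂μ
  rw [integral_finsetSum _ fun t ht =>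
    integrable_projGradResidual_sq η (hx t ht) (hmeas t) (hrange t)]
  calc (T : ℝ) / 2 = ∑ _t ∈ Icc 1 T, (1 / 2 : ℝ) := by
        rw [sum_const, Nat.card_Icc, nsmul_eq_mul, Nat.add_sub_cancel]; ring
    _ ≤ _ := sum_le_sum fun t ht => by
      have hfresh : t ∉ Set.Icc 1 (t - 1) := fun h => by
        simp only [Set.mem_Icc] at h; omega
      exact half_le_integral_projGradResidual_sq hη0 hη1
        (hindep.indepFun_of_measurable_iSup hmeas hfresh (hpred t ht)) (hx t ht) (hmeas t)
        (hrange t) (hdist1 t ht) (hdistm t ht)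

/-- linear regret for window size `w = 1`: with `proj` the metric projection
of `ℝ` onto `[−1, 1]`, the projected-gradient residual `P_η(x; d) = (x − proj(x − ηd))/η`,
i.i.d. Rademacher signs `ε_t`, losses `f_t(x) = ε_t·x` (so `∇f_t(x) = ε_t`), and any
predictable policy `(x_t)` with values in `[−1, 1]` (each `x_t` measurable with respect to
`σ(ε₁, …, ε_{t−1})`), the expected unsmoothed local regret satisfies
`E[Σ_{t=1}^T |P_η(x_t; ε_t)|²] ≥ T/2`. -/
theorem stmt17 {Ω : Type*} [MeasurableSpace Ω] (μ : Measure Ω) [IsProbabilityMeasure μ]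
    (η : ℝ) (hη0 : 0 < η) (hη1 : η ≤ 1)
    (proj : ℝ → ℝ) (hproj : ∀ s : ℝ, proj s = max (-1) (min 1 s))
    (T : ℕ) (hT : 1 ≤ T)
    (εs : ℕ → Ω → ℝ) (hmeas : ∀ t, Measurable (εs t))
    (hindep : iIndepFun εs μ)
    (hdist1 : ∀ t ∈ Finset.Icc 1 T, μ {ω | εs t ω = 1} = 1 / 2)
    (hdistm : ∀ t ∈ Finset.Icc 1 T, μ {ω | εs t ω = -1} = 1 / 2)
    (x : ℕ → Ω → ℝ)
    (hrange : ∀ t ω, x t ω ∈ Set.Icc (-1 : ℝ) 1)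
    (hpred : ∀ t ∈ Finset.Icc 1 T,
      Measurable[⨆ s ∈ Set.Icc 1 (t - 1), MeasurableSpace.comap (εs s)
        (inferInstance : MeasurableSpace ℝ)] (x t)) :
    (T : ℝ) / 2 ≤
      ∫ ω, (∑ t ∈ Finset.Icc 1 T, ((x t ω - proj (x t ω - η * εs t ω)) / η) ^ 2) ∂μ :=
  stmt17_general μ η hη0 hη1 proj hproj T εs hmeas hindep hdist1 hdistm x hrange hpred
end
end
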